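/- arXiv:2411.17222 — 3 statements merged into one kernel-verified Lean document; each statement's English description precedes it below -/
import Mathlib

section
/- If s > n−1 and 1 ≤ i ≤ j ≤ n, or s = n−1 and 2 ≤ i ≤ j ≤ n, then Z^{i,j} is nonempty. In particular (taking i = j) every set Z^i with 2 ≤ i ≤ n (and also Z^1 when s > n−1) is nonempty. -/
noncomputable section

/-- `x` is the nilpotent linear map on `ℂ^(n-1+s)` with `x e_i = e_{i-(n-1)}` for
`n ≤ i ≤ 2n-2` (1-indexed) and `x e_i = 0` otherwise. Indices of `Fin (n-1+s)` are
0-indexed, so `e_i` (math, 1-indexed) corresponds to `Pi.single ⟨i-1,_⟩ 1`. -/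
def IsDeltaMap (n s : ℕ)
    (x : (Fin (n - 1 + s) → ℂ) →ₗ[ℂ] (Fin (n - 1 + s) → ℂ)) : Prop :=
  ∀ i : Fin (n - 1 + s), x (Pi.single i 1) =
    if n ≤ (i : ℕ) + 1 ∧ (i : ℕ) + 1 ≤ 2 * n - 2 then
      Pi.single
        (⟨(i : ℕ) - (n - 1), Nat.lt_of_le_of_lt (Nat.sub_le _ _) i.isLt⟩ : Fin (n - 1 + s))
        (1 : ℂ)
    else 0

/-- A flag of type `(1^n, s-1)` in `ℂ^(n-1+s)`:
`0 = V 0 ⊆ V 1 ⊆ ⋯ ⊆ V n` with `dim (V j) = j` for `0 ≤ j ≤ n`. -/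
def IsFlag (n s : ℕ) (V : ℕ → Submodule ℂ (Fin (n - 1 + s) → ℂ)) : Prop :=
  V 0 = ⊥ ∧ (∀ j < n, V j ≤ V (j + 1)) ∧ ∀ j ≤ n, Module.finrank ℂ (V j) = j

/-- Membership in `Z^{i,j}`: a flag of type `(1^n,s-1)` with `V_{j-1} ⊆ im x`,
`im x ⊆ V_n` and `x V_n ⊆ V_{i-1}`. -/
def MemZij (n s i j : ℕ)
    (x : (Fin (n - 1 + s) → ℂ) →ₗ[ℂ] (Fin (n - 1 + s) → ℂ))
    (V : ℕ → Submodule ℂ (Fin (n - 1 + s) → ℂ)) : Prop :=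
  IsFlag n s V ∧ V (j - 1) ≤ LinearMap.range x ∧ LinearMap.range x ≤ V n ∧
    Submodule.map x (V n) ≤ V (i - 1)

/-- Membership in `Z^i = Z^{i,i}`. -/
def MemZ (n s i : ℕ)
    (x : (Fin (n - 1 + s) → ℂ) →ₗ[ℂ] (Fin (n - 1 + s) → ℂ))
    (V : ℕ → Submodule ℂ (Fin (n - 1 + s) → ℂ)) : Prop :=
  MemZij n s i i x V

/-- Membership in the Δ-Springer fiber `Y_{n,(1^{n-1}),s}`. -/
def MemY (n s : ℕ)
    (x : (Fin (n - 1 + s) → ℂ) →ₗ[ℂ] (Fin (n - 1 + s) → ℂ))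
    (V : ℕ → Submodule ℂ (Fin (n - 1 + s) → ℂ)) : Prop :=
  IsFlag n s V ∧ LinearMap.range x ≤ V n ∧ ∀ j ≤ n, Submodule.map x (V j) ≤ V j

/-!
Here `im x = span(e_1, …, e_{n-1})` and `x` kills it. Take `V_k = span(e_1, …, e_k)` for
`k ≤ n - 1` and `V_n = im x ⊕ ℂ e_c` for a coordinate `c ≥ n`. Then
`V_{j-1} ⊆ V_{n-1} = im x ⊆ V_n` and `x V_n = ℂ x e_c`. For `i ≥ 2` take `c = n`, so that
`x e_n = e_1 ∈ V_{i-1}`; for `i = 1` take `c = n - 1 + s`, which is at least `2n - 1` when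
`s > n - 1`, so that `x e_c = 0`.
-/

open Submodule

section SpanFlag

variable (R : Type*) {M : Type*} [Ring R] [AddCommGroup M] [Module R M] {n : ℕ}

def spanFlag (b : Fin n → M) (k : ℕ) : Submodule R M :=
  span R (b '' {m | (m : ℕ) < k})

variable {R} {b : Fin n → M} {k : ℕ} {p : Submodule R M}

theorem spanFlag_zero : spanFlag R b 0 = ⊥ := by
  simp [spanFlag]

theorem spanFlag_mono : Monotone (spanFlag R b) :=
  fun _ _ hkl ↦ span_mono (Set.image_mono fun _ hm ↦ lt_of_lt_of_le hm hkl)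

theorem mem_spanFlag {m : Fin n} (hm : (m : ℕ) < k) : b m ∈ spanFlag R b k :=
  subset_span ⟨m, hm, rfl⟩

theorem spanFlag_le_iff : spanFlag R b k ≤ p ↔ ∀ m : Fin n, (m : ℕ) < k → b m ∈ p := by
  simp [spanFlag, span_le, Set.subset_def]

theorem map_spanFlag_le_iff (f : M →ₗ[R] M) :
    map f (spanFlag R b k) ≤ p ↔ ∀ m : Fin n, (m : ℕ) < k → f (b m) ∈ p := by
  simp [spanFlag, map_span_le]

theorem finrank_spanFlag [Nontrivial R] [StrongRankCondition R] (hb : LinearIndependent R b)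
    (hk : k ≤ n) : Module.finrank R (spanFlag R b k) = k := by
  rw [spanFlag, ← Fin.range_castLE hk, ← Set.range_comp,
    finrank_span_eq_card (hb.comp _ (Fin.castLE_injective hk)), Fintype.card_fin]

end SpanFlag

theorem isFlag_spanFlag {n s : ℕ} {b : Fin n → Fin (n - 1 + s) → ℂ}
    (hb : LinearIndependent ℂ b) : IsFlag n s (spanFlag ℂ b) :=
  ⟨spanFlag_zero, fun j _ ↦ spanFlag_mono j.le_succ, fun _ hj ↦ finrank_spanFlag hb hj⟩

theorem LinearMap.range_le_of_basis {ι R M N : Type*} [Semiring R] [AddCommMonoid M]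
    [Module R M] [AddCommMonoid N] [Module R N] (b : Module.Basis ι R M) (f : M →ₗ[R] N)
    {p : Submodule R N} (h : ∀ i, f (b i) ∈ p) : LinearMap.range f ≤ p := by
  rw [LinearMap.range_eq_map, ← b.span_eq, map_span_le]
  rintro _ ⟨i, rfl⟩
  exact h i

section DeltaFlag

variable {n s : ℕ} {x : (Fin (n - 1 + s) → ℂ) →ₗ[ℂ] (Fin (n - 1 + s) → ℂ)}

namespace IsDeltaMap

theorem apply_single_of_lt (hx : IsDeltaMap n s x) {t : Fin (n - 1 + s)} (ht : (t : ℕ) < n - 1) :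
    x (Pi.single t 1) = 0 := by
  rw [hx t, if_neg (by omega)]

theorem apply_single_of_ge (hx : IsDeltaMap n s x) {t : Fin (n - 1 + s)} (ht : 2 * n - 2 ≤ t) :
    x (Pi.single t 1) = 0 := by
  rw [hx t, if_neg (by omega)]

theorem apply_single_add (hx : IsDeltaMap n s x) {m t : Fin (n - 1 + s)} (hm : (m : ℕ) < n - 1)
    (ht : (t : ℕ) = m + (n - 1)) :
    x (Pi.single t 1) = Pi.single m 1 := by
  rw [hx t, if_pos (by omega)]
  congr
  omega

theorem range_le (hx : IsDeltaMap n s x) {p : Submodule ℂ (Fin (n - 1 + s) → ℂ)}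
    (hp : ∀ m : Fin (n - 1 + s), (m : ℕ) < n - 1 → Pi.single m 1 ∈ p) :
    LinearMap.range x ≤ p := by
  refine LinearMap.range_le_of_basis (Pi.basisFun ℂ _) x fun t ↦ ?_
  rw [Pi.basisFun_apply, hx t]
  split_ifs with ht
  · exact hp _ (show (t : ℕ) - (n - 1) < n - 1 by omega)
  · exact zero_mem p

theorem single_mem_range (hx : IsDeltaMap n s x) (hs : n - 1 ≤ s) {m : Fin (n - 1 + s)}
    (hm : (m : ℕ) < n - 1) :
    Pi.single m 1 ∈ LinearMap.range x :=
  ⟨_, hx.apply_single_add (t := ⟨m + (n - 1), by omega⟩) hm rfl⟩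

end IsDeltaMap

/-- The coordinates `0, …, n - 2` followed by `c`. In the 1-indexed notation of the paper,
`deltaFlag c` is `V_k = span(e_1, …, e_k)` for `k ≤ n - 1` and
`V_n = V_{n-1} ⊕ ℂ e_{c+1}`. -/
def deltaIndex (c : Fin (n - 1 + s)) (m : Fin n) : Fin (n - 1 + s) :=
  if h : (m : ℕ) < n - 1 then ⟨m, by omega⟩ else c

def deltaFlag (c : Fin (n - 1 + s)) : ℕ → Submodule ℂ (Fin (n - 1 + s) → ℂ) :=
  spanFlag ℂ fun m ↦ Pi.single (deltaIndex c m) 1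

theorem val_deltaIndex_of_lt {c : Fin (n - 1 + s)} {m : Fin n} (hm : (m : ℕ) < n - 1) :
    (deltaIndex c m : ℕ) = m := by
  simp [deltaIndex, hm]

theorem deltaIndex_of_not_lt {c : Fin (n - 1 + s)} {m : Fin n} (hm : ¬(m : ℕ) < n - 1) :
    deltaIndex c m = c := by
  simp [deltaIndex, hm]

theorem deltaIndex_injective {c : Fin (n - 1 + s)} (hc : n - 1 ≤ c) :
    Function.Injective (deltaIndex c) := by
  intro a b hab
  unfold deltaIndex at hab
  split_ifs at hab <;> simp only [Fin.ext_iff] at hab ⊢ <;> omega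

theorem single_mem_deltaFlag {c t : Fin (n - 1 + s)} {k : ℕ} (ht : (t : ℕ) < n - 1)
    (hk : (t : ℕ) < k) : Pi.single t 1 ∈ deltaFlag c k := by
  have : deltaIndex c ⟨t, by omega⟩ = t := Fin.ext (val_deltaIndex_of_lt ht)
  exact this ▸ mem_spanFlag hk

theorem isFlag_deltaFlag {c : Fin (n - 1 + s)} (hc : n - 1 ≤ c) : IsFlag n s (deltaFlag c) := by
  refine isFlag_spanFlag ?_
  simpa [Function.comp_def] using
    (Pi.basisFun ℂ _).linearIndependent.comp _ (deltaIndex_injective hc)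

theorem IsDeltaMap.range_eq_deltaFlag (hx : IsDeltaMap n s x) (hs : n - 1 ≤ s)
    (c : Fin (n - 1 + s)) : LinearMap.range x = deltaFlag c (n - 1) := by
  apply le_antisymm
  · exact hx.range_le fun _ ht ↦ single_mem_deltaFlag ht ht
  · exact spanFlag_le_iff.2 fun m hm ↦
      hx.single_mem_range hs (by rwa [val_deltaIndex_of_lt hm])

theorem memZij_deltaFlag (hx : IsDeltaMap n s x) (hs : n - 1 ≤ s) {i j : ℕ} (hjn : j ≤ n)
    {c : Fin (n - 1 + s)} (hc : n - 1 ≤ c) (hxc : x (Pi.single c 1) ∈ deltaFlag c (i - 1)) :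
    MemZij n s i j x (deltaFlag c) := by
  have hrange := hx.range_eq_deltaFlag hs c
  refine ⟨isFlag_deltaFlag hc, ?_, ?_, ?_⟩
  · exact hrange ▸ spanFlag_mono (by omega)
  · exact hrange ▸ spanFlag_mono (by omega)
  · refine (map_spanFlag_le_iff x).2 fun m _ ↦ ?_
    by_cases hm : (m : ℕ) < n - 1
    · rw [hx.apply_single_of_lt (by rwa [val_deltaIndex_of_lt hm])]
      exact zero_mem _
    · rwa [deltaIndex_of_not_lt hm]

end DeltaFlag

theorem stmt_7_general (n s : ℕ) (hn : 2 ≤ n) (hs : n - 1 ≤ s)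
    (x : (Fin (n - 1 + s) → ℂ) →ₗ[ℂ] (Fin (n - 1 + s) → ℂ)) (hx : IsDeltaMap n s x)
    (i j : ℕ) (hjn : j ≤ n)
    (hcase : (n - 1 < s ∧ 1 ≤ i) ∨ (s = n - 1 ∧ 2 ≤ i)) :
    ∃ V : ℕ → Submodule ℂ (Fin (n - 1 + s) → ℂ), MemZij n s i j x V := by
  by_cases hi : 2 ≤ i
  · have h0 : 0 < n - 1 := by omega
    refine ⟨_, memZij_deltaFlag hx hs hjn (c := ⟨n - 1, by omega⟩) le_rfl ?_⟩
    rw [hx.apply_single_add (m := ⟨0, by omega⟩) h0 (zero_add _).symm]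
    exact single_mem_deltaFlag h0 (show 0 < i - 1 by omega)
  · have hsn : n - 1 < s := by rcases hcase with h | h <;> omega
    refine ⟨_, memZij_deltaFlag hx hs hjn (c := ⟨n - 1 + s - 1, by omega⟩)
      (show n - 1 ≤ n - 1 + s - 1 by omega) ?_⟩
    rw [hx.apply_single_of_ge (show 2 * n - 2 ≤ n - 1 + s - 1 by omega)]
    exact zero_mem _

/-- If `s > n-1` and `1 ≤ i ≤ j ≤ n`, or `s = n-1` and `2 ≤ i ≤ j ≤ n`,
then `Z^{i,j}` is nonempty. -/
theorem stmt_7 (n s : ℕ) (hn : 2 ≤ n) (hs : n - 1 ≤ s)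
    (x : (Fin (n - 1 + s) → ℂ) →ₗ[ℂ] (Fin (n - 1 + s) → ℂ)) (hx : IsDeltaMap n s x)
    (i j : ℕ) (hij : i ≤ j) (hjn : j ≤ n)
    (hcase : (n - 1 < s ∧ 1 ≤ i) ∨ (s = n - 1 ∧ 2 ≤ i)) :
    ∃ V : ℕ → Submodule ℂ (Fin (n - 1 + s) → ℂ), MemZij n s i j x V :=
  stmt_7_general n s hn hs x hx i j hjn hcase
end
end

section
/- Fix 1 ≤ i ≤ n and let w be the partial permutation of {1,…,n+s−1} given by w_t = n−t for 1 ≤ t ≤ i−1, w_i = n+s−1, and w_t = n−t+1 for i+1 ≤ t ≤ n (i.e. w = [n−1, n−2, …, n−i+1, n+s−1, n−i, …, 1]). Suppose a flag V_• ∈ Y_{n,(1^{n−1}),s} lies in the Schubert cell X_w°, i.e. for all 1 ≤ t ≤ n and 1 ≤ m ≤ n+s−1 one has dim(V_t ∩ span(e_1,…,e_m)) = #{r : 1 ≤ r ≤ t and w_r ≤ m}. Then V_• ∈ Z^i, i.e. V_{i−1} ⊆ im(x), im(x) ⊆ V_n, and x V_n ⊆ V_{i−1}. -/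
/-!
The image of `x` is `E = span(e_1, …, e_{n-1})`, and `x` kills `E`. For the word `w`, the only
letter exceeding `n - 1` is `w_i`, so the Schubert conditions at `m = n - 1` say that `V_{i-1} ⊆ E`
and `dim (V_i ∩ E) = i - 1`, whence `V_i ∩ E = V_{i-1}`. Counting dimensions, `V_i + E = V_n`,
so `x V_n = x V_i ⊆ V_i ∩ im x = V_{i-1}`.
-/

noncomputable section

open Module Submodule

def coordSpan (R : Type*) [Semiring R] (K m : ℕ) : Submodule R (Fin K → R) :=
  span R {v | ∃ p : Fin K, (p : ℕ) + 1 ≤ m ∧ v = Pi.single p 1}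

section LinearAlgebra

variable {R : Type*} [Field R]

theorem coordSpan_eq_span_range {K m : ℕ} (hm : m ≤ K) :
    coordSpan R K m = span R (Set.range fun j : Fin m => Pi.single (Fin.castLE hm j) (1 : R)) := by
  refine congrArg (span R) (Set.ext fun v => ⟨?_, ?_⟩)
  · rintro ⟨p, hp, rfl⟩
    exact ⟨⟨p, by omega⟩, rfl⟩
  · rintro ⟨j, rfl⟩
    exact ⟨Fin.castLE hm j, j.isLt, rfl⟩

theorem finrank_coordSpan {K m : ℕ} (hm : m ≤ K) : finrank R (coordSpan R K m) = m := by
  rw [coordSpan_eq_span_range hm]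
  exact (finrank_span_eq_card ((Pi.linearIndependent_single_one (Fin K) R).comp _
    (Fin.castLE_injective hm))).trans (Fintype.card_fin m)

variable {M : Type*} [AddCommGroup M] [Module R M] [FiniteDimensional R M]

theorem map_le_of_finrank_inf_eq {x : M →ₗ[R] M} {A B C E : Submodule R M}
    (hAB : A ≤ B) (hAE : A ≤ E) (hBC : B ≤ C) (hEC : E ≤ C)
    (hxB : map x B ≤ B) (hxE : LinearMap.range x ≤ E) (hxE₀ : map x E = ⊥)
    (hBE : finrank R ↥(B ⊓ E) = finrank R A)
    (hdim : finrank R C + finrank R A = finrank R B + finrank R E) :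
    map x C ≤ A := by
  have hinf : A = B ⊓ E := eq_of_le_of_finrank_eq (le_inf hAB hAE) hBE.symm
  have hsup : B ⊔ E = C := by
    refine eq_of_le_of_finrank_le (sup_le hBC hEC) ?_
    have := finrank_sup_add_finrank_inf_eq B E
    omega
  rw [← hsup, Submodule.map_sup, hxE₀, sup_bot_eq, hinf]
  exact le_inf hxB (LinearMap.map_le_range.trans hxE)

end LinearAlgebra

namespace IsDeltaMap

variable {n s : ℕ} {x : (Fin (n - 1 + s) → ℂ) →ₗ[ℂ] (Fin (n - 1 + s) → ℂ)}

theorem range_eq (hx : IsDeltaMap n s x) (hs : n - 1 ≤ s) :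
    LinearMap.range x = coordSpan ℂ (n - 1 + s) (n - 1) := by
  apply le_antisymm
  · rw [LinearMap.range_eq_map, ← (Pi.basisFun ℂ _).span_eq, map_span, span_le]
    rintro _ ⟨_, ⟨p, rfl⟩, rfl⟩
    rw [Pi.basisFun_apply, hx p]
    split_ifs
    · exact subset_span ⟨_, by simp only; omega, rfl⟩
    · exact zero_mem _
  · rw [coordSpan, span_le]
    rintro _ ⟨p, hp, rfl⟩
    refine ⟨Pi.single (⟨p + (n - 1), by omega⟩ : Fin (n - 1 + s)) 1, ?_⟩
    rw [hx, if_pos (by simp only; omega)]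
    congr 2
    simp

theorem map_coordSpan (hx : IsDeltaMap n s x) :
    map x (coordSpan ℂ (n - 1 + s) (n - 1)) = ⊥ := by
  rw [coordSpan, map_span, ← le_bot_iff, span_le]
  rintro _ ⟨_, ⟨p, hp, rfl⟩, rfl⟩
  rw [SetLike.mem_coe, mem_bot, hx p, if_neg (by omega)]

end IsDeltaMap

theorem IsFlag.mono {n s : ℕ} {V : ℕ → Submodule ℂ (Fin (n - 1 + s) → ℂ)} (hV : IsFlag n s V)
    {a b : ℕ} (hab : a ≤ b) (hb : b ≤ n) : V a ≤ V b := by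
  induction b, hab using Nat.le_induction with
  | base => exact le_rfl
  | succ b _ ih => exact (ih (by omega)).trans (hV.2.1 b (by omega))

theorem filter_le_pred_eq_erase {n s i t : ℕ} {w : ℕ → ℕ} (hs : 0 < s) (hi : 1 ≤ i)
    (hw : ∀ t, 1 ≤ t → t ≤ n →
      w t = if t ≤ i - 1 then n - t else if t = i then n + s - 1 else n - t + 1)
    (ht : t ≤ n) :
    (Finset.Icc 1 t).filter (fun r => w r ≤ n - 1) = (Finset.Icc 1 t).erase i := by
  ext r
  simp only [Finset.mem_filter, Finset.mem_erase, Finset.mem_Icc]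
  constructor
  · rintro ⟨hr, hwr⟩
    refine ⟨?_, hr⟩
    rintro rfl
    rw [hw _ hr.1 (by omega), if_neg (by omega), if_pos rfl] at hwr
    omega
  · rintro ⟨hri, hr⟩
    refine ⟨hr, ?_⟩
    rw [hw r hr.1 (by omega)]
    split_ifs <;> omega

/-- if `V ∈ Y_{n,(1^{n-1}),s}` lies in the Schubert cell `X_w°` for
`w = [n-1, n-2, …, n-i+1, n+s-1, n-i, …, 1]` (all 1-indexed; the Schubert cell is
characterized by `dim (V_t ∩ span(e_1,…,e_m)) = #{r ≤ t : w_r ≤ m}`), then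
`V ∈ Z^i`, i.e. `V_{i-1} ⊆ im x`, `im x ⊆ V_n`, `x V_n ⊆ V_{i-1}`. -/
theorem stmt_9 (n s : ℕ) (hn : 2 ≤ n) (hs : n - 1 ≤ s)
    (x : (Fin (n - 1 + s) → ℂ) →ₗ[ℂ] (Fin (n - 1 + s) → ℂ)) (hx : IsDeltaMap n s x)
    (i : ℕ) (hi1 : 1 ≤ i) (hin : i ≤ n)
    (w : ℕ → ℕ)
    (hwdef : ∀ t, 1 ≤ t → t ≤ n →
      w t = if t ≤ i - 1 then n - t else if t = i then n + s - 1 else n - t + 1)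
    (V : ℕ → Submodule ℂ (Fin (n - 1 + s) → ℂ)) (hVY : MemY n s x V)
    (hSchubert : ∀ t, 1 ≤ t → t ≤ n → ∀ m, 1 ≤ m → m ≤ n + s - 1 →
      Module.finrank ℂ
        ↥(V t ⊓ Submodule.span ℂ
          {v | ∃ p : Fin (n - 1 + s), (p : ℕ) + 1 ≤ m ∧ v = Pi.single p (1 : ℂ)})
        = ((Finset.Icc 1 t).filter (fun r => w r ≤ m)).card) :
    MemZ n s i x V := by
  obtain ⟨hflag, hrangeV, hinv⟩ := hVY
  have hdim := hflag.2.2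
  set E := coordSpan ℂ (n - 1 + s) (n - 1)
  have hrange : LinearMap.range x = E := hx.range_eq hs
  have hschubert (t : ℕ) (ht1 : 1 ≤ t) (htn : t ≤ n) :
      finrank ℂ ↥(V t ⊓ E) = ((Finset.Icc 1 t).erase i).card := by
    rw [← filter_le_pred_eq_erase (by omega) hi1 hwdef htn]
    exact hSchubert t ht1 htn (n - 1) (by omega) (by omega)
  have hprev : V (i - 1) ≤ E := by
    rcases Nat.eq_or_lt_of_le hi1 with rfl | hi
    · simp [hflag.1]
    · have h := hschubert (i - 1) (by omega) (by omega)
      rw [Finset.erase_eq_of_notMem (by simp only [Finset.mem_Icc]; omega), Nat.card_Icc,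
        Nat.add_sub_cancel] at h
      exact inf_eq_left.mp (eq_of_le_of_finrank_eq inf_le_left (h.trans (hdim _ (by omega)).symm))
  have hcur : finrank ℂ ↥(V i ⊓ E) = finrank ℂ (V (i - 1)) := by
    rw [hschubert i hi1 hin, Finset.card_erase_of_mem (by simp only [Finset.mem_Icc]; omega),
      Nat.card_Icc, hdim (i - 1) (by omega), Nat.add_sub_cancel]
  refine ⟨hflag, hrange ▸ hprev, hrangeV, ?_⟩
  refine map_le_of_finrank_inf_eq (hflag.mono (by omega) hin) hprev (hflag.mono hin le_rfl)
    (hrange ▸ hrangeV) (hinv i hin) hrange.le hx.map_coordSpan hcur ?_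
  rw [hdim n le_rfl, hdim i hin, hdim (i - 1) (by omega), finrank_coordSpan (by omega)]
  omega
end
end

section
/- Let 2 ≤ i ≤ j ≤ n and let D be the set of flags V_• ∈ Z^{i,j} such that V_j ⊄ im(x) and x V_n ⊄ V_{i−2}. For V_• ∈ D define φ(V_•) = (V_1, …, V_{j−1}, V_{j+1} ∩ im(x), …, V_n ∩ im(x)). Then φ(V_•) is a complete flag of im(x), i.e. an increasing chain of subspaces of im(x) of dimensions 1, 2, …, n−1, and φ maps D surjectively onto the set of all complete flags of im(x). -/
noncomputable section

/-!
Write `R = im x`; it has dimension `n - 1` and `x` vanishes on it. For `V` in `D`, the space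
`V_n` contains `R` with codimension one, so for `t ≥ j` the spaces `V_t ⊄ R` meet `R` in a
hyperplane of `V_t`, which makes `φ(V)` a complete flag of `R`. Conversely, given a complete flag
`W` of `R`, pick `w ∈ W_{i-1} \ W_{i-2}` and `v` with `x v = w`; then `v ∉ R` because `w ≠ 0`, and
inserting the line through `v` from position `j` on, `V_t = W_{t-1} + ℂ v` for `t ≥ j`, gives a
flag in `D` with `φ(V) = W`: `x V_n = ℂ w`, which lies in `W_{i-1}` but not in `W_{i-2}`.
-/

open Module Submodule

section Flags

variable {K E : Type*} [Field K] [AddCommGroup E] [Module K E]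

def IsFullFlag (m : ℕ) (V : ℕ → Submodule K E) : Prop :=
  V 0 = ⊥ ∧ (∀ t < m, V t ≤ V (t + 1)) ∧ ∀ t ≤ m, finrank K (V t) = t

def IsCompleteChain (m : ℕ) (W : ℕ → Submodule K E) : Prop :=
  (∀ t, 1 ≤ t → t + 1 ≤ m → W t ≤ W (t + 1)) ∧ ∀ t, 1 ≤ t → t ≤ m → finrank K (W t) = t

/-- The map `φ` of the paper, with `R = im x`. -/
def collapseFlag (j : ℕ) (R : Submodule K E) (V : ℕ → Submodule K E) (t : ℕ) :
    Submodule K E :=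
  if t ≤ j - 1 then V t else V (t + 1) ⊓ R

def insertLine (j : ℕ) (v : E) (W : ℕ → Submodule K E) (t : ℕ) : Submodule K E :=
  if t < j then W t else W (t - 1) ⊔ K ∙ v

variable {m n i j : ℕ} {R : Submodule K E} {V W : ℕ → Submodule K E}

theorem IsFullFlag.le_of_le (hV : IsFullFlag m V) {a b : ℕ} (hab : a ≤ b) (hb : b ≤ m) :
    V a ≤ V b :=
  monotoneOn_of_le_add_one Set.ordConnected_Iic (fun t _ _ ht => hV.2.1 t ht)
    (Set.mem_Iic.2 (hab.trans hb)) (Set.mem_Iic.2 hb) hab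

theorem IsFullFlag.lt_add_one (hV : IsFullFlag m V) {t : ℕ} (ht : t < m) : V t < V (t + 1) :=
  lt_of_le_of_finrank_lt_finrank (hV.2.1 t ht) (by rw [hV.2.2 t ht.le, hV.2.2 (t + 1) ht]; omega)

theorem isFullFlag_update_zero (hW : IsCompleteChain m W) :
    IsFullFlag m (Function.update W 0 ⊥) := by
  refine ⟨by simp, fun t ht => ?_, fun t ht => ?_⟩
  · rcases Nat.eq_zero_or_pos t with rfl | ht0
    · simp
    · rw [Function.update_of_ne ht0.ne', Function.update_of_ne (by omega)]
      exact hW.1 t ht0 ht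
  · rcases Nat.eq_zero_or_pos t with rfl | ht0
    · rw [Function.update_self, finrank_bot]
    · rw [Function.update_of_ne ht0.ne']
      exact hW.2 t ht0 ht

theorem finrank_inf_add_one_of_not_le [FiniteDimensional K E] {U A : Submodule K E}
    (hU : U ≤ A) (hR : R ≤ A) (hRA : finrank K R + 1 = finrank K A) (hUR : ¬ U ≤ R) :
    finrank K (U ⊓ R : Submodule K E) + 1 = finrank K U := by
  have hlt : R < U ⊔ R := lt_of_le_of_ne le_sup_right fun h => hUR (h ▸ le_sup_left)
  have hsup_lt := finrank_lt_finrank_of_lt hlt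
  have hsup_le := finrank_mono (sup_le hU hR)
  have := finrank_sup_add_finrank_inf_eq U R
  omega

theorem map_sup_span_singleton_of_le_ker {f : E →ₗ[K] E} {U : Submodule K E}
    (hU : U ≤ LinearMap.ker f) (v : E) : map f (U ⊔ K ∙ v) = K ∙ f v := by
  rw [Submodule.map_sup, LinearMap.le_ker_iff_map.1 hU, bot_sup_eq, map_span, Set.image_singleton]

section Collapse

variable [FiniteDimensional K E]

theorem IsFullFlag.finrank_inf_add_one (hV : IsFullFlag n V) (hR : finrank K R + 1 = n)
    (hRn : R ≤ V n) (hVj : ¬ V j ≤ R) {t : ℕ} (hjt : j ≤ t) (htn : t ≤ n) :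
    finrank K (V t ⊓ R : Submodule K E) + 1 = t := by
  refine (finrank_inf_add_one_of_not_le (hV.le_of_le htn le_rfl) hRn ?_ ?_).trans (hV.2.2 t htn)
  · rw [hV.2.2 n le_rfl, hR]
  · exact fun h => hVj ((hV.le_of_le hjt htn).trans h)

theorem IsFullFlag.isCompleteChain_collapseFlag (hV : IsFullFlag n V)
    (hR : finrank K R + 1 = n) (hjR : V (j - 1) ≤ R) (hRn : R ≤ V n) (hVj : ¬ V j ≤ R)
    (hj : j ≤ n) : IsCompleteChain (n - 1) (collapseFlag j R V) := by
  refine ⟨fun t ht1 htn => ?_, fun t ht1 htn => ?_⟩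
  · unfold collapseFlag
    by_cases h1 : t + 1 ≤ j - 1
    · rw [if_pos (by omega), if_pos h1]
      exact hV.2.1 t (by omega)
    by_cases h2 : t ≤ j - 1
    · rw [if_pos h2, if_neg h1]
      obtain rfl : t = j - 1 := by omega
      exact le_inf (hV.le_of_le (by omega) (by omega)) hjR
    · rw [if_neg h2, if_neg h1]
      exact inf_le_inf_right _ (hV.2.1 (t + 1) (by omega))
  · unfold collapseFlag
    by_cases h : t ≤ j - 1
    · rw [if_pos h]
      exact hV.2.2 t (by omega)
    · rw [if_neg h]
      have := hV.finrank_inf_add_one hR hRn hVj (t := t + 1) (by omega) (by omega)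
      omega

theorem IsFullFlag.collapseFlag_sub_one (hV : IsFullFlag n V) (hR : finrank K R + 1 = n)
    (hjR : V (j - 1) ≤ R) (hRn : R ≤ V n) (hj : j ≤ n) : collapseFlag j R V (n - 1) = R := by
  unfold collapseFlag
  split_ifs with h
  · obtain hjn : j - 1 = n - 1 := by omega
    exact eq_of_le_of_finrank_eq (hjn ▸ hjR) (by rw [hV.2.2 _ (by omega)]; omega)
  · rwa [Nat.sub_add_cancel (by omega), inf_eq_right]

end Collapse

section Insert

variable {v : E}

theorem insertLine_of_lt {t : ℕ} (ht : t < j) : insertLine j v W t = W t := if_pos ht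

theorem insertLine_of_le {t : ℕ} (ht : j ≤ t) : insertLine j v W t = W (t - 1) ⊔ K ∙ v :=
  if_neg (Nat.not_lt.2 ht)

theorem IsFullFlag.insertLine [FiniteDimensional K E] (hW : IsFullFlag m W) (hv : v ∉ W m)
    (hj1 : 1 ≤ j) (hjm : j ≤ m + 1) : IsFullFlag (m + 1) (insertLine j v W) := by
  have hdim : ∀ t ≤ m, finrank K (W t ⊔ K ∙ v : Submodule K E) = t + 1 := fun t ht => by
    rw [finrank_sup_span_singleton fun h => hv (hW.le_of_le ht le_rfl h), hW.2.2 t ht]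
  refine ⟨by rw [insertLine_of_lt (by omega), hW.1], fun t ht => ?_, fun t ht => ?_⟩
  · by_cases h1 : t + 1 < j
    · rw [insertLine_of_lt h1, insertLine_of_lt (by omega)]
      exact hW.2.1 t (by omega)
    rw [insertLine_of_le (Nat.not_lt.1 h1), Nat.add_sub_cancel]
    by_cases h2 : t < j
    · rw [insertLine_of_lt h2]
      exact le_sup_left
    · rw [insertLine_of_le (Nat.not_lt.1 h2)]
      exact sup_le_sup_right (hW.le_of_le (by omega) (by omega)) _
  · by_cases h : t < j
    · rw [insertLine_of_lt h]
      exact hW.2.2 t (by omega)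
    · rw [insertLine_of_le (Nat.not_lt.1 h), hdim (t - 1) (by omega)]
      omega

theorem mem_insertLine {t : ℕ} (ht : j ≤ t) : v ∈ insertLine j v W t := by
  rw [insertLine_of_le ht]
  exact mem_sup_right (mem_span_singleton_self v)

theorem insertLine_inf_eq {t : ℕ} (ht : j ≤ t) (hWR : W (t - 1) ≤ R) (hvR : v ∉ R) :
    insertLine j v W t ⊓ R = W (t - 1) := by
  rw [insertLine_of_le ht, sup_inf_assoc_of_le _ hWR,
    (disjoint_span_singleton_of_notMem hvR).symm.eq_bot, sup_bot_eq]

end Insert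

theorem exists_isFullFlag_collapseFlag_eq [FiniteDimensional K E] {f : E →ₗ[K] E}
    (hf : LinearMap.range f ≤ LinearMap.ker f) (hW : IsCompleteChain (n - 1) W)
    (hWtop : W (n - 1) = LinearMap.range f) (hi : 2 ≤ i) (hij : i ≤ j) (hj : j ≤ n) :
    ∃ V : ℕ → Submodule K E,
      (IsFullFlag n V ∧ V (j - 1) ≤ LinearMap.range f ∧ LinearMap.range f ≤ V n ∧
        map f (V n) ≤ V (i - 1)) ∧
      ¬ V j ≤ LinearMap.range f ∧ ¬ map f (V n) ≤ V (i - 2) ∧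
      ∀ t, 1 ≤ t → t ≤ n - 1 → collapseFlag j (LinearMap.range f) V t = W t := by
  set R := LinearMap.range f
  -- `W 0` is arbitrary; resetting it to `⊥` makes `W₀ (i - 2)` the right space also for `i = 2`.
  set W₀ := Function.update W 0 ⊥
  have hW₀ : IsFullFlag (n - 1) W₀ := isFullFlag_update_zero hW
  have hW₀_eq : ∀ t, 1 ≤ t → W₀ t = W t := fun t ht => Function.update_of_ne (by omega) _ _
  have hW₀R : ∀ t ≤ n - 1, W₀ t ≤ R := fun t ht =>
    (hW₀.le_of_le ht le_rfl).trans (by rw [hW₀_eq _ (by omega), hWtop])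
  obtain ⟨w, hw, hw'⟩ := SetLike.exists_of_lt (hW₀.lt_add_one (t := i - 2) (by omega))
  rw [show i - 2 + 1 = i - 1 by omega] at hw
  obtain ⟨v, rfl⟩ := hW₀R (i - 1) (by omega) hw
  have hvR : v ∉ R := fun h => hw' (by rw [LinearMap.mem_ker.1 (hf h)]; exact zero_mem _)
  have hV : IsFullFlag n (insertLine j v W₀) := by
    simpa only [Nat.sub_add_cancel (by omega : 1 ≤ n)] using
      hW₀.insertLine (fun h => hvR (hW₀R _ le_rfl h)) (by omega) (by omega)
  have hVn : insertLine j v W₀ n = R ⊔ K ∙ v := by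
    rw [insertLine_of_le hj, hW₀_eq _ (by omega), hWtop]
  have hmap : map f (insertLine j v W₀ n) = K ∙ f v := by
    rw [hVn, map_sup_span_singleton_of_le_ker hf]
  refine ⟨insertLine j v W₀, ⟨hV, ?_, ?_, ?_⟩, ?_, ?_, fun t ht1 htn => ?_⟩
  · rw [insertLine_of_lt (by omega)]
    exact hW₀R _ (by omega)
  · rw [hVn]
    exact le_sup_left
  · rwa [hmap, span_singleton_le_iff_mem, insertLine_of_lt (by omega)]
  · exact fun h => hvR (h (mem_insertLine le_rfl))
  · rwa [hmap, span_singleton_le_iff_mem, insertLine_of_lt (by omega)]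
  · unfold collapseFlag
    split_ifs
    · rw [insertLine_of_lt (by omega), hW₀_eq t ht1]
    · rw [insertLine_inf_eq (by omega) (hW₀R _ (by omega)) hvR, Nat.add_sub_cancel, hW₀_eq t ht1]

end Flags

section DeltaMap

variable {n s : ℕ} {x : (Fin (n - 1 + s) → ℂ) →ₗ[ℂ] (Fin (n - 1 + s) → ℂ)}

theorem IsDeltaMap.range_eq_span (hx : IsDeltaMap n s x) (hs : n - 1 ≤ s) :
    LinearMap.range x =
      span ℂ (Set.range fun m : Fin (n - 1) => Pi.single (Fin.castAdd s m) (1 : ℂ)) := by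
  apply le_antisymm
  · rw [LinearMap.range_eq_map, ← (Pi.basisFun ℂ (Fin (n - 1 + s))).span_eq, map_span,
      span_le]
    rintro _ ⟨_, ⟨i, rfl⟩, rfl⟩
    rw [Pi.basisFun_apply, hx i]
    split_ifs
    · exact subset_span ⟨⟨i - (n - 1), by omega⟩, by congr 1⟩
    · exact zero_mem _
  · rw [span_le]
    rintro _ ⟨m, rfl⟩
    have hm := m.isLt
    refine ⟨Pi.single ⟨m + (n - 1), by omega⟩ 1, ?_⟩
    rw [hx, if_pos (by dsimp only; omega)]
    congr 1
    ext
    simp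

theorem IsDeltaMap.finrank_range (hx : IsDeltaMap n s x) (hs : n - 1 ≤ s) :
    finrank ℂ (LinearMap.range x) = n - 1 := by
  rw [hx.range_eq_span hs, finrank_span_eq_card, Fintype.card_fin]
  simpa [Function.comp_def] using
    (Pi.basisFun ℂ (Fin (n - 1 + s))).linearIndependent.comp _ (Fin.castAdd_injective _ s)

theorem IsDeltaMap.range_le_ker (hx : IsDeltaMap n s x) (hs : n - 1 ≤ s) :
    LinearMap.range x ≤ LinearMap.ker x := by
  rw [hx.range_eq_span hs, span_le]
  rintro _ ⟨m, rfl⟩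
  have hm := m.isLt
  rw [SetLike.mem_coe, LinearMap.mem_ker, hx, if_neg (by simp only [Fin.val_castAdd]; omega)]

end DeltaMap

theorem stmt_14_general (n s : ℕ) (hs : n - 1 ≤ s)
    (x : (Fin (n - 1 + s) → ℂ) →ₗ[ℂ] (Fin (n - 1 + s) → ℂ)) (hx : IsDeltaMap n s x)
    (i j : ℕ) (hi : 2 ≤ i) (hij : i ≤ j) (hj : j ≤ n) :
    (∀ V : ℕ → Submodule ℂ (Fin (n - 1 + s) → ℂ), MemZij n s i j x V →
      ¬ V j ≤ LinearMap.range x → ¬ Submodule.map x (V n) ≤ V (i - 2) →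
      ((∀ t : ℕ, 1 ≤ t → t + 1 ≤ n - 1 →
          (if t ≤ j - 1 then V t else V (t + 1) ⊓ LinearMap.range x) ≤
            (if t + 1 ≤ j - 1 then V (t + 1) else V (t + 2) ⊓ LinearMap.range x)) ∧
        (∀ t : ℕ, 1 ≤ t → t ≤ n - 1 →
          Module.finrank ℂ
            ↥(if t ≤ j - 1 then V t else V (t + 1) ⊓ LinearMap.range x) = t) ∧
        (if n - 1 ≤ j - 1 then V (n - 1) else V n ⊓ LinearMap.range x)
          = LinearMap.range x)) ∧
    (∀ W : ℕ → Submodule ℂ (Fin (n - 1 + s) → ℂ),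
      (∀ t : ℕ, 1 ≤ t → t + 1 ≤ n - 1 → W t ≤ W (t + 1)) →
      (∀ t : ℕ, 1 ≤ t → t ≤ n - 1 → Module.finrank ℂ (W t) = t) →
      W (n - 1) = LinearMap.range x →
      ∃ V : ℕ → Submodule ℂ (Fin (n - 1 + s) → ℂ),
        MemZij n s i j x V ∧ ¬ V j ≤ LinearMap.range x ∧
        ¬ Submodule.map x (V n) ≤ V (i - 2) ∧
        ∀ t : ℕ, 1 ≤ t → t ≤ n - 1 →
          (if t ≤ j - 1 then V t else V (t + 1) ⊓ LinearMap.range x) = W t) := by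
  have hR : finrank ℂ (LinearMap.range x) + 1 = n := by
    rw [hx.finrank_range hs]
    omega
  refine ⟨fun V ⟨hV, hjR, hRn, _⟩ hVj _ => ?_, fun W hWmono hWdim hWtop => ?_⟩
  · obtain ⟨hmono, hdim⟩ := IsFullFlag.isCompleteChain_collapseFlag hV hR hjR hRn hVj hj
    have htop := IsFullFlag.collapseFlag_sub_one hV hR hjR hRn hj
    rw [collapseFlag, Nat.sub_add_cancel (by omega : 1 ≤ n)] at htop
    exact ⟨hmono, hdim, htop⟩
  · exact exists_isFullFlag_collapseFlag_eq (hx.range_le_ker hs) ⟨hWmono, hWdim⟩ hWtop hi hij hj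

/-- let `2 ≤ i ≤ j ≤ n` and let `D ⊆ Z^{i,j}` be the set of flags
with `V_j ⊄ im x` and `x V_n ⊄ V_{i-2}`. The map
`φ(V) = (V_1,…,V_{j-1}, V_{j+1} ∩ im x, …, V_n ∩ im x)` (whose `t`-th component,
`1 ≤ t ≤ n-1`, is `V t` if `t ≤ j-1` and `V (t+1) ⊓ im x` otherwise) sends each
`V ∈ D` to a complete flag of `im x` (a chain of subspaces of dimensions
`1,…,n-1` with top term `im x`), and is surjective onto the set of complete
flags of `im x`. -/
theorem stmt_14 (n s : ℕ) (hn : 2 ≤ n) (hs : n - 1 ≤ s)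
    (x : (Fin (n - 1 + s) → ℂ) →ₗ[ℂ] (Fin (n - 1 + s) → ℂ)) (hx : IsDeltaMap n s x)
    (i j : ℕ) (hi : 2 ≤ i) (hij : i ≤ j) (hj : j ≤ n) :
    (∀ V : ℕ → Submodule ℂ (Fin (n - 1 + s) → ℂ), MemZij n s i j x V →
      ¬ V j ≤ LinearMap.range x → ¬ Submodule.map x (V n) ≤ V (i - 2) →
      ((∀ t : ℕ, 1 ≤ t → t + 1 ≤ n - 1 →
          (if t ≤ j - 1 then V t else V (t + 1) ⊓ LinearMap.range x) ≤
            (if t + 1 ≤ j - 1 then V (t + 1) else V (t + 2) ⊓ LinearMap.range x)) ∧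
        (∀ t : ℕ, 1 ≤ t → t ≤ n - 1 →
          Module.finrank ℂ
            ↥(if t ≤ j - 1 then V t else V (t + 1) ⊓ LinearMap.range x) = t) ∧
        (if n - 1 ≤ j - 1 then V (n - 1) else V n ⊓ LinearMap.range x)
          = LinearMap.range x)) ∧
    (∀ W : ℕ → Submodule ℂ (Fin (n - 1 + s) → ℂ),
      (∀ t : ℕ, 1 ≤ t → t + 1 ≤ n - 1 → W t ≤ W (t + 1)) →
      (∀ t : ℕ, 1 ≤ t → t ≤ n - 1 → Module.finrank ℂ (W t) = t) →
      W (n - 1) = LinearMap.range x →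
      ∃ V : ℕ → Submodule ℂ (Fin (n - 1 + s) → ℂ),
        MemZij n s i j x V ∧ ¬ V j ≤ LinearMap.range x ∧
        ¬ Submodule.map x (V n) ≤ V (i - 2) ∧
        ∀ t : ℕ, 1 ≤ t → t ≤ n - 1 →
          (if t ≤ j - 1 then V t else V (t + 1) ⊓ LinearMap.range x) = W t) :=
  stmt_14_general n s hs x hx i j hi hij hj
end
end
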